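/- arXiv:2011.04970 — 4 statements merged into one kernel-verified Lean document; each statement's English description precedes it below -/
import Mathlib

section
/- Let Q₁, Q₂ be positive semidefinite d×d real matrices whose blocks (Q₁)_uu and (Q₂)_uu are positive definite (so the uu-block of Q₁+Q₂ is also positive definite). Then π(Q₁ + Q₂) ≥ π(Q₁) + π(Q₂) in the Loewner order. -/
open MeasureTheory Matrix Filter ProbabilityTheory
open scoped ENNReal NNReal

noncomputable section

instance matrixMeasurableSpace {I J : Type*} : MeasurableSpace (Matrix I J ℝ) :=
  inferInstanceAs (MeasurableSpace (I → J → ℝ))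

/-- The Schur-complement map `π(P) = P_xx − P_xu P_uu⁻¹ P_ux`. -/
def piMap {n m : ℕ} (P : Matrix (Fin n ⊕ Fin m) (Fin n ⊕ Fin m) ℝ) :
    Matrix (Fin n) (Fin n) ℝ :=
  P.toBlocks₁₁ - P.toBlocks₁₂ * P.toBlocks₂₂⁻¹ * P.toBlocks₂₁

/-- The feedback-gain map `Γ(P) = −P_uu⁻¹ P_ux`. -/
def gammaMap {n m : ℕ} (P : Matrix (Fin n ⊕ Fin m) (Fin n ⊕ Fin m) ℝ) :
    Matrix (Fin m) (Fin n) ℝ :=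
  -(P.toBlocks₂₂⁻¹ * P.toBlocks₂₁)

/-- Loewner order: `X ≤ Y` iff `Y - X` is positive semidefinite. -/
def loewnerLE {I : Type*} [Fintype I] (X Y : Matrix I I ℝ) : Prop :=
  (Y - X).PosSemidef

/-- Spectral norm (`2`-norm) of a real matrix. -/
def specNorm {I J : Type*} [Fintype I] [Fintype J] [DecidableEq J]
    (M : Matrix I J ℝ) : ℝ :=
  ‖LinearMap.toContinuousLinearMap (Matrix.toEuclideanLin M)‖

/-- Entrywise expectation of a random matrix. -/
def matExp {Ω : Type*} [MeasurableSpace Ω] (μpr : Measure Ω) {I J : Type*}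
    (M : Ω → Matrix I J ℝ) : Matrix I J ℝ :=
  Matrix.of fun i j => ∫ ω, M ω i j ∂μpr


/-! Completing the square in `y` gives
`(x, y)ᵀ Q (x, y) = xᵀ π(Q) x + (y - Γ(Q) x)ᵀ Q_uu (y - Γ(Q) x)`, so `xᵀ π(Q) x = min_y (x, y)ᵀ Q (x, y)`, attained at `y = Γ(Q) x`. A minimum of a sum dominates
the sum of the minima: at the minimizer `y` for `Q₁ + Q₂`, the form of `Q₁ + Q₂` is the sum of the
forms of `Q₁` and `Q₂`, each of which is at least `xᵀ π(Qᵢ) x`. -/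

theorem loewnerLE_of_dotProduct_mulVec_le {I : Type*} [Fintype I] {X Y : Matrix I I ℝ}
    (hX : X.IsHermitian) (hY : Y.IsHermitian) (h : ∀ x, x ⬝ᵥ X *ᵥ x ≤ x ⬝ᵥ Y *ᵥ x) :
    loewnerLE X Y := by
  refine PosSemidef.of_dotProduct_mulVec_nonneg (hY.sub hX) fun x => ?_
  rw [star_trivial, sub_mulVec, dotProduct_sub, sub_nonneg]
  exact h x

namespace Matrix.IsHermitian

variable {l o α : Type*} [InvolutiveStar α] {Q : Matrix (l ⊕ o) (l ⊕ o) α}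

theorem toBlocks_isHermitian (hQ : Q.IsHermitian) :
    Q.toBlocks₁₁.IsHermitian ∧ Q.toBlocks₁₂ᴴ = Q.toBlocks₂₁ ∧ Q.toBlocks₂₂.IsHermitian := by
  obtain ⟨h₁₁, h₁₂, -, h₂₂⟩ := isHermitian_fromBlocks_iff.mp (Q.fromBlocks_toBlocks.symm ▸ hQ)
  exact ⟨h₁₁, h₁₂, h₂₂⟩

theorem eq_fromBlocks_conjTranspose (hQ : Q.IsHermitian) :
    Q = Matrix.fromBlocks Q.toBlocks₁₁ Q.toBlocks₁₂ Q.toBlocks₁₂ᴴ Q.toBlocks₂₂ := by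
  rw [hQ.toBlocks_isHermitian.2.1, fromBlocks_toBlocks]

end Matrix.IsHermitian

section SchurComplement

variable {n m : ℕ} {Q : Matrix (Fin n ⊕ Fin m) (Fin n ⊕ Fin m) ℝ}

theorem piMap_isHermitian (hQ : Q.IsHermitian) : (piMap Q).IsHermitian := by
  obtain ⟨h₁₁, h₁₂, h₂₂⟩ := hQ.toBlocks_isHermitian
  rw [piMap, ← h₁₂]
  exact h₁₁.sub (isHermitian_mul_mul_conjTranspose _ h₂₂.inv)

theorem dotProduct_mulVec_sumElim_eq_piMap_add (hQ : Q.IsHermitian) [Invertible Q.toBlocks₂₂]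
    (x : Fin n → ℝ) (y : Fin m → ℝ) :
    (x ⊕ᵥ y) ⬝ᵥ Q *ᵥ (x ⊕ᵥ y) =
      x ⬝ᵥ piMap Q *ᵥ x + (y - gammaMap Q *ᵥ x) ⬝ᵥ Q.toBlocks₂₂ *ᵥ (y - gammaMap Q *ᵥ x) := by
  obtain ⟨-, h₁₂, h₂₂⟩ := hQ.toBlocks_isHermitian
  have hsq := schur_complement_eq₂₂ Q.toBlocks₁₁ Q.toBlocks₁₂ x y h₂₂
  rw [← hQ.eq_fromBlocks_conjTranspose, h₁₂] at hsq
  simp only [star_trivial, ← dotProduct_mulVec] at hsq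
  rw [hsq, add_comm, piMap, gammaMap, neg_mulVec, sub_neg_eq_add, add_comm y]

theorem dotProduct_mulVec_piMap_le (hQ : Q.IsHermitian) (hD : Q.toBlocks₂₂.PosDef)
    (x : Fin n → ℝ) (y : Fin m → ℝ) :
    x ⬝ᵥ piMap Q *ᵥ x ≤ (x ⊕ᵥ y) ⬝ᵥ Q *ᵥ (x ⊕ᵥ y) := by
  have := hD.isUnit.invertible
  rw [dotProduct_mulVec_sumElim_eq_piMap_add hQ]
  have := hD.posSemidef.dotProduct_mulVec_nonneg (y - gammaMap Q *ᵥ x)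
  rw [star_trivial] at this
  linarith

theorem dotProduct_mulVec_gammaMap_eq (hQ : Q.IsHermitian) [Invertible Q.toBlocks₂₂]
    (x : Fin n → ℝ) :
    (x ⊕ᵥ gammaMap Q *ᵥ x) ⬝ᵥ Q *ᵥ (x ⊕ᵥ gammaMap Q *ᵥ x) = x ⬝ᵥ piMap Q *ᵥ x := by
  rw [dotProduct_mulVec_sumElim_eq_piMap_add hQ, sub_self, mulVec_zero, dotProduct_zero, add_zero]

end SchurComplement

/-- Superadditivity of `π`: `π(Q₁ + Q₂) ≥ π(Q₁) + π(Q₂)` in the Loewner order. -/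
theorem piMap_superadditive {n m : ℕ}
    (Q₁ Q₂ : Matrix (Fin n ⊕ Fin m) (Fin n ⊕ Fin m) ℝ)
    (hQ₁ : Q₁.PosSemidef) (hQ₂ : Q₂.PosSemidef)
    (huu₁ : Q₁.toBlocks₂₂.PosDef) (huu₂ : Q₂.toBlocks₂₂.PosDef) :
    loewnerLE (piMap Q₁ + piMap Q₂) (piMap (Q₁ + Q₂)) := by
  have hQ : (Q₁ + Q₂).IsHermitian := hQ₁.1.add hQ₂.1
  have huu : (Q₁ + Q₂).toBlocks₂₂.PosDef := huu₁.add huu₂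
  have := huu.isUnit.invertible
  refine loewnerLE_of_dotProduct_mulVec_le ((piMap_isHermitian hQ₁.1).add
    (piMap_isHermitian hQ₂.1)) (piMap_isHermitian hQ) fun x => ?_
  set v := x ⊕ᵥ gammaMap (Q₁ + Q₂) *ᵥ x
  calc x ⬝ᵥ (piMap Q₁ + piMap Q₂) *ᵥ x = x ⬝ᵥ piMap Q₁ *ᵥ x + x ⬝ᵥ piMap Q₂ *ᵥ x := by
        rw [add_mulVec, dotProduct_add]
    _ ≤ v ⬝ᵥ Q₁ *ᵥ v + v ⬝ᵥ Q₂ *ᵥ v :=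
        add_le_add (dotProduct_mulVec_piMap_le hQ₁.1 huu₁ x _)
          (dotProduct_mulVec_piMap_le hQ₂.1 huu₂ x _)
    _ = v ⬝ᵥ (Q₁ + Q₂) *ᵥ v := by rw [add_mulVec, dotProduct_add]
    _ = x ⬝ᵥ piMap (Q₁ + Q₂) *ᵥ x := dotProduct_mulVec_gammaMap_eq hQ x

end
end

section
/- Let (f_t)_{t≥0} be a bounded sequence of real numbers, and let (β_t)_{t≥0} ⊆ [0,1] satisfy ∑_{t≥0} β_t = ∞. Suppose the real sequence (y_t)_{t≥0} satisfies y_{t+1} ≤ (1 − β_t) y_t + β_t f_t for all t ≥ 0. Then limsup_{t→∞} y_t ≤ limsup_{t→∞} f_t. -/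
open Filter

/-- Core real lemma: if `y (t+1) - b ≤ (1 - β t) * (y t - b)` for `t ≥ N`,
with `β t ∈ [0,1]` and divergent partial sums, then eventually `y t ≤ b + ε`. -/
lemma aux_eventually_le (y β : ℕ → ℝ)
    (hβ : ∀ t, β t ∈ Set.Icc (0 : ℝ) 1)
    (hβdiv : Tendsto (fun T => ∑ t ∈ Finset.range T, β t) atTop atTop)
    (N : ℕ) (b ε : ℝ) (hε : 0 < ε)
    (hrec : ∀ t, N ≤ t → y (t + 1) - b ≤ (1 - β t) * (y t - b)) :
    ∀ᶠ t in atTop, y t ≤ b + ε := by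
  by_cases hcase : ∃ t, N ≤ t ∧ y t ≤ b
  · obtain ⟨t0, ht0, hy0⟩ := hcase
    have key : ∀ k, y (t0 + k) ≤ b := by
      intro k
      induction k with
      | zero => simpa using hy0
      | succ k ih =>
        have h1 := hrec (t0 + k) (le_trans ht0 (Nat.le_add_right _ _))
        have h2 : (1 - β (t0 + k)) * (y (t0 + k) - b) ≤ 0 :=
          mul_nonpos_of_nonneg_of_nonpos (by linarith [(hβ (t0 + k)).2]) (by linarith)
        have : y (t0 + k + 1) - b ≤ 0 := le_trans h1 h2
        have heq : t0 + (k + 1) = t0 + k + 1 := by ring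
        rw [heq]; linarith
    filter_upwards [eventually_ge_atTop t0] with t ht
    have := key (t - t0)
    rw [Nat.add_sub_cancel' ht] at this
    linarith
  · push_neg at hcase
    -- y t > b for all t ≥ N
    have hprod : ∀ k, y (N + k) - b ≤
        (y N - b) * ∏ s ∈ Finset.Ico N (N + k), (1 - β s) := by
      intro k
      induction k with
      | zero => simp
      | succ k ih =>
        have h1 := hrec (N + k) (Nat.le_add_right _ _)
        have hβk := hβ (N + k)
        have hnn : (0 : ℝ) ≤ 1 - β (N + k) := by linarith [hβk.2]
        have h2 : (1 - β (N + k)) * (y (N + k) - b) ≤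
            (1 - β (N + k)) * ((y N - b) * ∏ s ∈ Finset.Ico N (N + k), (1 - β s)) :=
          mul_le_mul_of_nonneg_left ih hnn
        have hps : ∏ s ∈ Finset.Ico N (N + (k + 1)), (1 - β s) =
            (∏ s ∈ Finset.Ico N (N + k), (1 - β s)) * (1 - β (N + k)) := by
          rw [show N + (k + 1) = (N + k) + 1 by ring]
          exact Finset.prod_Ico_succ_top (Nat.le_add_right _ _) _
        rw [hps, show N + (k + 1) = N + k + 1 by ring]
        calc y (N + k + 1) - b ≤ (1 - β (N + k)) * (y (N + k) - b) := h1
          _ ≤ (1 - β (N + k)) * ((y N - b) * ∏ s ∈ Finset.Ico N (N + k), (1 - β s)) := h2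
          _ = (y N - b) * ((∏ s ∈ Finset.Ico N (N + k), (1 - β s)) * (1 - β (N + k))) := by ring
    have hexp : ∀ k, (∏ s ∈ Finset.Ico N (N + k), (1 - β s)) ≤
        Real.exp (-(∑ s ∈ Finset.Ico N (N + k), β s)) := by
      intro k
      have h1 : (∏ s ∈ Finset.Ico N (N + k), (1 - β s)) ≤
          ∏ s ∈ Finset.Ico N (N + k), Real.exp (-(β s)) := by
        apply Finset.prod_le_prod
        · intro s _; linarith [(hβ s).2]
        · intro s _
          have := Real.add_one_le_exp (-(β s))
          linarith
      rw [← Real.exp_sum] at h1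
      simpa [Finset.sum_neg_distrib] using h1
    -- the sum over Ico tends to infinity in k
    have hsum : Tendsto (fun k => ∑ s ∈ Finset.Ico N (N + k), β s) atTop atTop := by
      have heq : ∀ k, ∑ s ∈ Finset.Ico N (N + k), β s =
          (∑ s ∈ Finset.range (k + N), β s) + -∑ s ∈ Finset.range N, β s := by
        intro k
        rw [Nat.add_comm k N, ← sub_eq_add_neg,
          Finset.sum_Ico_eq_sub _ (Nat.le_add_right _ _)]
      simp only [heq]
      exact tendsto_atTop_add_const_right _ _ (hβdiv.comp (tendsto_add_atTop_nat N))
    have htend : Tendsto (fun k => (y N - b) * Real.exp (-(∑ s ∈ Finset.Ico N (N + k), β s)))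
        atTop (nhds 0) := by
      have := (Real.tendsto_exp_neg_atTop_nhds_zero).comp hsum
      simpa using this.const_mul (y N - b)
    have hev : ∀ᶠ k in atTop,
        (y N - b) * Real.exp (-(∑ s ∈ Finset.Ico N (N + k), β s)) < ε :=
      htend.eventually_lt_const hε
    obtain ⟨K, hK⟩ := hev.exists_forall_of_atTop
    filter_upwards [eventually_ge_atTop (N + K)] with t ht
    have htN : N ≤ t := le_trans (Nat.le_add_right _ _) ht
    have hk : K ≤ t - N := by omega
    have h1 := hprod (t - N)
    have h2 := hK (t - N) hk
    have hexp' := hexp (t - N)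
    have hnn : 0 ≤ y N - b := by linarith [hcase N le_rfl]
    have h3 : (y N - b) * (∏ s ∈ Finset.Ico N (N + (t - N)), (1 - β s)) ≤
        (y N - b) * Real.exp (-(∑ s ∈ Finset.Ico N (N + (t - N)), β s)) :=
      mul_le_mul_of_nonneg_left hexp' hnn
    rw [Nat.add_sub_cancel' htN] at h1 h3 h2
    linarith

/-- If `f` is bounded, `β_t ∈ [0,1]` with `∑ β_t = ∞`, and
`y_{t+1} ≤ (1 − β_t) y_t + β_t f_t`, then `limsup y ≤ limsup f`. -/
theorem limsup_le_of_recursive_bound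
    (f y β : ℕ → ℝ)
    (hf : ∃ C : ℝ, ∀ t, |f t| ≤ C)
    (hβ : ∀ t, β t ∈ Set.Icc (0 : ℝ) 1)
    (hβdiv : Tendsto (fun T => ∑ t ∈ Finset.range T, β t) atTop atTop)
    (hy : ∀ t, y (t + 1) ≤ (1 - β t) * y t + β t * f t) :
    limsup (fun t => (y t : EReal)) atTop ≤ limsup (fun t => (f t : EReal)) atTop := by
  by_contra hcon
  push_neg at hcon
  obtain ⟨c, hc1, hc2⟩ := EReal.exists_between_coe_real hcon
  obtain ⟨c', hc'1, hc'2⟩ := EReal.exists_between_coe_real hc1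
  have hc'lt : c' < c := by exact_mod_cast hc'2
  set ε := c - c' with hεdef
  have hε : 0 < ε := by linarith
  -- eventually f t < c'
  have hflt : ∀ᶠ t in atTop, (f t : EReal) < (c' : EReal) :=
    eventually_lt_of_limsup_lt hc'1
  obtain ⟨N, hN⟩ := hflt.exists_forall_of_atTop
  have hfc : ∀ t, N ≤ t → f t ≤ c' := fun t ht => le_of_lt (by exact_mod_cast hN t ht)
  have hrec : ∀ t, N ≤ t → y (t + 1) - c' ≤ (1 - β t) * (y t - c') := by
    intro t ht
    have h1 := hy t
    have h2 : β t * f t ≤ β t * c' := mul_le_mul_of_nonneg_left (hfc t ht) (hβ t).1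
    nlinarith [(hβ t).1, (hβ t).2]
  have hev := aux_eventually_le y β hβ hβdiv N c' ε hε hrec
  have : limsup (fun t => (y t : EReal)) atTop ≤ ((c' + ε : ℝ) : EReal) := by
    apply limsup_le_of_le
    · isBoundedDefault
    · filter_upwards [hev] with t ht
      exact_mod_cast ht
  have hcc : ((c' + ε : ℝ) : EReal) = (c : EReal) := by
    norm_cast; ring
  rw [hcc] at this
  exact absurd (lt_of_le_of_lt this hc2) (lt_irrefl _)
end

section
/- The Riccati iteration sequence is monotone increasing: each K_t is positive semidefinite and K_t ≤ K_{t+1} in the Loewner order for all t ≥ 0, where K_0 = O and K_{t+1} = π(E[N₁ + A₁ᵀ K_t A₁]). -/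
open MeasureTheory Matrix Filter ProbabilityTheory
open scoped ENNReal NNReal

noncomputable section

section LQ

variable {n m : ℕ} {Ω : Type*} [MeasurableSpace Ω]

/-- The filtration `𝓕_t = σ(A_s, N_s : 1 ≤ s ≤ t)` (with `𝓕_0` trivial). -/
def lqFiltration (A : ℕ → Ω → Matrix (Fin n) (Fin n ⊕ Fin m) ℝ)
    (N : ℕ → Ω → Matrix (Fin n ⊕ Fin m) (Fin n ⊕ Fin m) ℝ) :
    ℕ → MeasurableSpace Ω := fun t =>
  ⨆ s ∈ Finset.Icc 1 t, MeasurableSpace.comap (fun ω => (A s ω, N s ω)) inferInstance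

/-- A control is admissible if it is adapted to the filtration. -/
def Admissible {k : ℕ} (F : ℕ → MeasurableSpace Ω) (u : ℕ → Ω → Fin k → ℝ) : Prop :=
  ∀ t, @Measurable Ω (Fin k → ℝ) (F t) _ (u t)

/-- The state process `x_0 = x`, `x_{t+1} = A_{t+1} [x_t; u_t]`. -/
def statePath (A : ℕ → Ω → Matrix (Fin n) (Fin n ⊕ Fin m) ℝ)
    (x : Fin n → ℝ) (u : ℕ → Ω → Fin m → ℝ) : ℕ → Ω → Fin n → ℝ
  | 0 => fun _ => x
  | t + 1 => fun ω => A (t + 1) ω *ᵥ Sum.elim (statePath A x u t ω) (u t ω)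

/-- The stage cost `[x_tᵀ, u_tᵀ] N_{t+1} [x_t; u_t]`. -/
def stageCost (A : ℕ → Ω → Matrix (Fin n) (Fin n ⊕ Fin m) ℝ)
    (N : ℕ → Ω → Matrix (Fin n ⊕ Fin m) (Fin n ⊕ Fin m) ℝ)
    (x : Fin n → ℝ) (u : ℕ → Ω → Fin m → ℝ) (t : ℕ) (ω : Ω) : ℝ :=
  Sum.elim (statePath A x u t ω) (u t ω) ⬝ᵥ
    (N (t + 1) ω *ᵥ Sum.elim (statePath A x u t ω) (u t ω))

/-- The total cost `J(x, u) ∈ [0,∞]`. -/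
def costJ (A : ℕ → Ω → Matrix (Fin n) (Fin n ⊕ Fin m) ℝ)
    (N : ℕ → Ω → Matrix (Fin n ⊕ Fin m) (Fin n ⊕ Fin m) ℝ)
    (x : Fin n → ℝ) (u : ℕ → Ω → Fin m → ℝ) (ω : Ω) : ℝ≥0∞ :=
  ∑' t, ENNReal.ofReal (stageCost A N x u t ω)

/-- The value function `V(x) = inf over admissible u of E[J(x,u)]`. -/
def valueV (μpr : Measure Ω) (A : ℕ → Ω → Matrix (Fin n) (Fin n ⊕ Fin m) ℝ)
    (N : ℕ → Ω → Matrix (Fin n ⊕ Fin m) (Fin n ⊕ Fin m) ℝ)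
    (x : Fin n → ℝ) : ℝ≥0∞ :=
  ⨅ (u : ℕ → Ω → Fin m → ℝ) (_ : Admissible (lqFiltration A N) u),
    ∫⁻ ω, costJ A N x u ω ∂μpr

/-- The Riccati iteration `K_0 = O`, `K_{t+1} = π(E[N₁ + A₁ᵀ K_t A₁])`. -/
def Kseq (μpr : Measure Ω) (A : ℕ → Ω → Matrix (Fin n) (Fin n ⊕ Fin m) ℝ)
    (N : ℕ → Ω → Matrix (Fin n ⊕ Fin m) (Fin n ⊕ Fin m) ℝ) :
    ℕ → Matrix (Fin n) (Fin n) ℝ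
  | 0 => 0
  | t + 1 => piMap (matExp μpr (fun ω => N 1 ω + (A 1 ω)ᵀ * Kseq μpr A N t * A 1 ω))

/-- The Q-learning process of Algorithm 1. -/
def Qproc (A : ℕ → Ω → Matrix (Fin n) (Fin n ⊕ Fin m) ℝ)
    (N : ℕ → Ω → Matrix (Fin n ⊕ Fin m) (Fin n ⊕ Fin m) ℝ)
    (α : ℕ → Ω → ℝ) (Q0 : Matrix (Fin n ⊕ Fin m) (Fin n ⊕ Fin m) ℝ) :
    ℕ → Ω → Matrix (Fin n ⊕ Fin m) (Fin n ⊕ Fin m) ℝ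
  | 0 => fun _ => Q0
  | t + 1 => fun ω =>
      Qproc A N α Q0 t ω + α t ω •
        (N (t + 1) ω + (A (t + 1) ω)ᵀ * piMap (Qproc A N α Q0 t ω) * A (t + 1) ω
          - Qproc A N α Q0 t ω)

end LQ

/-!
For `P` symmetric with `P_uu` positive definite, completing the square in the second block gives
`xᵀ π(P) x = min_y [x; y]ᵀ P [x; y]`, attained at `y = Γ(P) x`. A pointwise minimum of quadratic
forms is monotone, so `π` is monotone in the Loewner order; so is `K ↦ E[N₁ + A₁ᵀ K A₁]`, by
linearity and positivity of the expectation. As `E[N₁]` is positive definite, this matrix is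
positive definite whenever `K` is positive semidefinite, so every `K_t` is positive semidefinite,
and `K_0 = O ≤ K_1` propagates to `K_t ≤ K_{t+1}` through the monotone map `K ↦ π(E[N₁ + A₁ᵀ K A₁])`.
-/

open scoped Matrix.Norms.L2Operator

section SpecNorm

variable {I J : Type*} [Fintype I] [Fintype J] [DecidableEq J]

theorem specNorm_eq_norm (M : Matrix I J ℝ) : specNorm M = ‖M‖ := rfl

theorem abs_apply_le_specNorm (M : Matrix I J ℝ) (i : I) (j : J) : |M i j| ≤ specNorm M := by
  have hcol := M.l2_opNorm_mulVec (EuclideanSpace.single j 1)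
  rw [PiLp.norm_single, norm_one, mul_one] at hcol
  calc |M i j|
      = ‖(EuclideanSpace.equiv I ℝ).symm (M *ᵥ EuclideanSpace.single j (1 : ℝ)) i‖ := by
        simp
    _ ≤ _ := PiLp.norm_apply_le _ i
    _ ≤ specNorm M := hcol

theorem specNorm_add_transpose_mul_mul_le [DecidableEq I] (N : Matrix J J ℝ) (A : Matrix I J ℝ)
    (K : Matrix I I ℝ) :
    specNorm (N + Aᵀ * K * A) ≤ specNorm N + specNorm K * specNorm (Aᵀ * A) := by
  simp only [specNorm_eq_norm]
  refine (norm_add_le _ _).trans (add_le_add_right ?_ _)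
  rw [← conjTranspose_eq_transpose_of_trivial]
  calc ‖Aᴴ * K * A‖ ≤ ‖Aᴴ‖ * ‖K‖ * ‖A‖ := by
        grw [l2_opNorm_mul, l2_opNorm_mul]
    _ = ‖K‖ * ‖Aᴴ * A‖ := by
        rw [l2_opNorm_conjTranspose, l2_opNorm_conjTranspose_mul_self]; ring

end SpecNorm

section Expectation

variable {Ω : Type*} [MeasurableSpace Ω] (μ : Measure Ω)

theorem matExp_sub {I J : Type*} (M M' : Ω → Matrix I J ℝ)
    (hM : ∀ i j, Integrable (fun ω => M ω i j) μ)
    (hM' : ∀ i j, Integrable (fun ω => M' ω i j) μ) :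
    matExp μ M' - matExp μ M = matExp μ (fun ω => M' ω - M ω) := by
  ext i j
  exact (integral_sub (hM' i j) (hM i j)).symm

variable {I : Type*} [Fintype I]

theorem dotProduct_mulVec_matExp (M : Ω → Matrix I I ℝ)
    (hM : ∀ i j, Integrable (fun ω => M ω i j) μ) (x : I → ℝ) :
    x ⬝ᵥ matExp μ M *ᵥ x = ∫ ω, x ⬝ᵥ M ω *ᵥ x ∂μ := by
  simp only [dotProduct, mulVec, matExp, of_apply, Finset.mul_sum]
  rw [integral_finsetSum _ fun i _ =>
    integrable_finsetSum _ fun j _ => ((hM i j).mul_const _).const_mul _]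
  refine Finset.sum_congr rfl fun i _ => ?_
  rw [integral_finsetSum _ fun j _ => ((hM i j).mul_const _).const_mul _]
  refine Finset.sum_congr rfl fun j _ => ?_
  rw [integral_const_mul, integral_mul_const]

theorem matExp_posSemidef {M : Ω → Matrix I I ℝ} (hpsd : ∀ ω, (M ω).PosSemidef)
    (hM : ∀ i j, Integrable (fun ω => M ω i j) μ) : (matExp μ M).PosSemidef := by
  refine posSemidef_iff_dotProduct_mulVec.2 ⟨IsHermitian.ext fun i j => ?_, fun x => ?_⟩
  · rw [star_trivial]
    exact integral_congr_ae (ae_of_all _ fun ω => (hpsd ω).isHermitian.apply i j)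
  · rw [star_trivial, dotProduct_mulVec_matExp μ M hM]
    exact integral_nonneg fun ω => by simpa using (hpsd ω).dotProduct_mulVec_nonneg x

theorem loewnerLE_matExp {M M' : Ω → Matrix I I ℝ} (hle : ∀ ω, loewnerLE (M ω) (M' ω))
    (hM : ∀ i j, Integrable (fun ω => M ω i j) μ)
    (hM' : ∀ i j, Integrable (fun ω => M' ω i j) μ) : loewnerLE (matExp μ M) (matExp μ M') := by
  rw [loewnerLE, matExp_sub μ M M' hM hM']
  exact matExp_posSemidef μ hle fun i j => (hM' i j).sub (hM i j)

end Expectation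

section Loewner

variable {I J : Type*} [Fintype I] [Fintype J]

theorem loewnerLE_iff_dotProduct_mulVec_le {X Y : Matrix I I ℝ} (hX : X.IsHermitian)
    (hY : Y.IsHermitian) : loewnerLE X Y ↔ ∀ x, x ⬝ᵥ X *ᵥ x ≤ x ⬝ᵥ Y *ᵥ x := by
  simp only [loewnerLE, posSemidef_iff_dotProduct_mulVec, hY.sub hX, true_and, star_trivial,
    sub_mulVec, dotProduct_sub, sub_nonneg]

theorem loewnerLE_add_transpose_mul_mul (N : Matrix J J ℝ) (A : Matrix I J ℝ)
    {K K' : Matrix I I ℝ} (h : loewnerLE K K') :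
    loewnerLE (N + Aᵀ * K * A) (N + Aᵀ * K' * A) := by
  rw [loewnerLE, add_sub_add_left_eq_sub, ← Matrix.sub_mul, ← Matrix.mul_sub,
    ← conjTranspose_eq_transpose_of_trivial]
  exact h.conjTranspose_mul_mul_same A

end Loewner

section SchurComplement

theorem toBlocks₂₁_eq_conjTranspose {I J : Type*} {P : Matrix (I ⊕ J) (I ⊕ J) ℝ}
    (hP : P.IsHermitian) : P.toBlocks₂₁ = P.toBlocks₁₂ᴴ := by
  ext i j
  change P (Sum.inr i) (Sum.inl j) = star (P (Sum.inl j) (Sum.inr i))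
  exact (hP.apply (Sum.inr i) (Sum.inl j)).symm

theorem isHermitian_toBlocks₂₂ {I J : Type*} {P : Matrix (I ⊕ J) (I ⊕ J) ℝ}
    (hP : P.IsHermitian) : P.toBlocks₂₂.IsHermitian :=
  hP.submatrix Sum.inr

variable {n m : ℕ} {P Q : Matrix (Fin n ⊕ Fin m) (Fin n ⊕ Fin m) ℝ}

theorem isHermitian_piMap (hP : P.IsHermitian) : (piMap P).IsHermitian := by
  rw [piMap, toBlocks₂₁_eq_conjTranspose hP]
  refine (IsHermitian.fromBlocks₂₂ _ _ (isHermitian_toBlocks₂₂ hP)).1 ?_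
  rwa [← toBlocks₂₁_eq_conjTranspose hP, fromBlocks_toBlocks]

theorem piMap_posSemidef (hP : P.PosSemidef) (hPuu : P.toBlocks₂₂.PosDef) :
    (piMap P).PosSemidef := by
  have := hPuu.isUnit.invertible
  rw [piMap, toBlocks₂₁_eq_conjTranspose hP.isHermitian]
  refine (PosDef.fromBlocks₂₂ _ _ hPuu).1 ?_
  rwa [← toBlocks₂₁_eq_conjTranspose hP.isHermitian, fromBlocks_toBlocks]

theorem sumElim_dotProduct_mulVec_sumElim (hP : P.IsHermitian) [Invertible P.toBlocks₂₂]
    (x : Fin n → ℝ) (y : Fin m → ℝ) :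
    (x ⊕ᵥ y) ⬝ᵥ P *ᵥ (x ⊕ᵥ y) =
      (y - gammaMap P *ᵥ x) ⬝ᵥ P.toBlocks₂₂ *ᵥ (y - gammaMap P *ᵥ x) + x ⬝ᵥ piMap P *ᵥ x := by
  have h := schur_complement_eq₂₂ P.toBlocks₁₁ P.toBlocks₁₂ x y (isHermitian_toBlocks₂₂ hP)
  rw [← toBlocks₂₁_eq_conjTranspose hP, fromBlocks_toBlocks] at h
  simp only [star_trivial, ← dotProduct_mulVec] at h
  rw [h, piMap, gammaMap, neg_mulVec, sub_neg_eq_add, add_comm y]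

theorem dotProduct_mulVec_piMap_le_s7 (hP : P.IsHermitian) (hPuu : P.toBlocks₂₂.PosDef)
    (x : Fin n → ℝ) (y : Fin m → ℝ) :
    x ⬝ᵥ piMap P *ᵥ x ≤ (x ⊕ᵥ y) ⬝ᵥ P *ᵥ (x ⊕ᵥ y) := by
  have := hPuu.isUnit.invertible
  rw [sumElim_dotProduct_mulVec_sumElim hP]
  have hsq := hPuu.posSemidef.dotProduct_mulVec_nonneg (y - gammaMap P *ᵥ x)
  rw [star_trivial] at hsq
  linarith

theorem dotProduct_mulVec_piMap_eq (hP : P.IsHermitian) [Invertible P.toBlocks₂₂]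
    (x : Fin n → ℝ) :
    x ⬝ᵥ piMap P *ᵥ x = (x ⊕ᵥ gammaMap P *ᵥ x) ⬝ᵥ P *ᵥ (x ⊕ᵥ gammaMap P *ᵥ x) := by
  rw [sumElim_dotProduct_mulVec_sumElim hP, sub_self, zero_dotProduct, zero_add]

theorem piMap_mono (hP : P.IsHermitian) (hPuu : P.toBlocks₂₂.PosDef) (hPQ : loewnerLE P Q) :
    loewnerLE (piMap P) (piMap Q) := by
  have hQ : Q.IsHermitian := by simpa using hPQ.isHermitian.add hP
  have hQuu : Q.toBlocks₂₂.PosDef := by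
    convert hPuu.add_posSemidef (hPQ.submatrix Sum.inr) using 1
    ext i j
    simp [toBlocks₂₂]
  have := hQuu.isUnit.invertible
  refine (loewnerLE_iff_dotProduct_mulVec_le (isHermitian_piMap hP) (isHermitian_piMap hQ)).2
    fun x => ?_
  calc x ⬝ᵥ piMap P *ᵥ x
      ≤ (x ⊕ᵥ gammaMap Q *ᵥ x) ⬝ᵥ P *ᵥ (x ⊕ᵥ gammaMap Q *ᵥ x) :=
        dotProduct_mulVec_piMap_le_s7 hP hPuu _ _
    _ ≤ (x ⊕ᵥ gammaMap Q *ᵥ x) ⬝ᵥ Q *ᵥ (x ⊕ᵥ gammaMap Q *ᵥ x) :=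
        (loewnerLE_iff_dotProduct_mulVec_le hP hQ).1 hPQ _
    _ = x ⬝ᵥ piMap Q *ᵥ x := (dotProduct_mulVec_piMap_eq hQ x).symm

end SchurComplement

section Riccati

variable {Ω : Type*} [MeasurableSpace Ω] (μ : Measure Ω) {I J : Type*} [Fintype I] [Fintype J]

/-- The matrix of the Q-function for the cost-to-go matrix `K`. -/
def qMatrix (A : Ω → Matrix I J ℝ) (N : Ω → Matrix J J ℝ) (K : Matrix I I ℝ) : Matrix J J ℝ :=
  matExp μ fun ω => N ω + (A ω)ᵀ * K * A ω

theorem Kseq_succ {n m : ℕ} (A : ℕ → Ω → Matrix (Fin n) (Fin n ⊕ Fin m) ℝ)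
    (N : ℕ → Ω → Matrix (Fin n ⊕ Fin m) (Fin n ⊕ Fin m) ℝ) (t : ℕ) :
    Kseq μ A N (t + 1) = piMap (qMatrix μ (A 1) (N 1) (Kseq μ A N t)) := rfl

variable [IsFiniteMeasure μ] [DecidableEq I] [DecidableEq J] {A : Ω → Matrix I J ℝ}
  {N : Ω → Matrix J J ℝ}

theorem integrable_add_transpose_mul_mul_apply (hmeas : Measurable fun ω => (A ω, N ω))
    (hmom : Integrable (fun ω => specNorm (N ω) ^ 2 + specNorm ((A ω)ᵀ * A ω) ^ 2) μ)
    (K : Matrix I I ℝ) (i j : J) : Integrable (fun ω => (N ω + (A ω)ᵀ * K * A ω) i j) μ := by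
  have hA : ∀ k l, Measurable fun ω => A ω k l := fun k l =>
    (measurable_pi_apply l).comp ((measurable_pi_apply k).comp (measurable_fst.comp hmeas))
  have hN : ∀ k l, Measurable fun ω => N ω k l := fun k l =>
    (measurable_pi_apply l).comp ((measurable_pi_apply k).comp (measurable_snd.comp hmeas))
  refine ((integrable_const 1).add hmom |>.const_mul (1 + specNorm K)).mono' ?_
    (ae_of_all _ fun ω => ?_)
  · simp only [Matrix.add_apply, mul_apply, transpose_apply]
    exact Measurable.aestronglyMeasurable (by fun_prop)
  · have hN0 : 0 ≤ specNorm (N ω) := norm_nonneg _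
    have hK0 : 0 ≤ specNorm K := norm_nonneg _
    calc ‖(N ω + (A ω)ᵀ * K * A ω) i j‖ ≤ specNorm (N ω + (A ω)ᵀ * K * A ω) :=
          abs_apply_le_specNorm _ i j
      _ ≤ specNorm (N ω) + specNorm K * specNorm ((A ω)ᵀ * A ω) :=
          specNorm_add_transpose_mul_mul_le _ _ _
      _ ≤ (1 + specNorm K) * (1 + (specNorm (N ω) ^ 2 + specNorm ((A ω)ᵀ * A ω) ^ 2)) := by
          nlinarith [sq_nonneg (specNorm (N ω) - 1), sq_nonneg (specNorm ((A ω)ᵀ * A ω) - 1)]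

theorem qMatrix_mono (hmeas : Measurable fun ω => (A ω, N ω))
    (hmom : Integrable (fun ω => specNorm (N ω) ^ 2 + specNorm ((A ω)ᵀ * A ω) ^ 2) μ)
    {K K' : Matrix I I ℝ} (hKK' : loewnerLE K K') :
    loewnerLE (qMatrix μ A N K) (qMatrix μ A N K') :=
  loewnerLE_matExp μ (fun ω => loewnerLE_add_transpose_mul_mul (N ω) (A ω) hKK')
    (integrable_add_transpose_mul_mul_apply μ hmeas hmom K)
    (integrable_add_transpose_mul_mul_apply μ hmeas hmom K')

theorem qMatrix_posDef (hmeas : Measurable fun ω => (A ω, N ω))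
    (hmom : Integrable (fun ω => specNorm (N ω) ^ 2 + specNorm ((A ω)ᵀ * A ω) ^ 2) μ)
    (hN : (matExp μ N).PosDef) {K : Matrix I I ℝ} (hK : K.PosSemidef) :
    (qMatrix μ A N K).PosDef := by
  have hle := qMatrix_mono μ hmeas hmom (K := 0) (K' := K) (by rwa [loewnerLE, sub_zero])
  have hq0 : qMatrix μ A N 0 = matExp μ N := by simp [qMatrix]
  rw [hq0] at hle
  simpa using hN.add_posSemidef hle

end Riccati

theorem Kseq_monotone_general
    {n m : ℕ} {Ω : Type*} [MeasurableSpace Ω]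
    (μpr : Measure Ω) [IsProbabilityMeasure μpr]
    (A : ℕ → Ω → Matrix (Fin n) (Fin n ⊕ Fin m) ℝ)
    (N : ℕ → Ω → Matrix (Fin n ⊕ Fin m) (Fin n ⊕ Fin m) ℝ)
    (hmeas : ∀ t : ℕ, Measurable fun ω => (A (t + 1) ω, N (t + 1) ω))
    (hmom : Integrable
      (fun ω => specNorm (N 1 ω) ^ 2 + specNorm ((A 1 ω)ᵀ * A 1 ω) ^ 2) μpr)
    (hENpos : (matExp μpr (N 1)).PosDef)
    : ∀ t : ℕ, (Kseq μpr A N t).PosSemidef ∧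
      loewnerLE (Kseq μpr A N t) (Kseq μpr A N (t + 1)) := by
  have hq {K : Matrix (Fin n) (Fin n) ℝ} (hK : K.PosSemidef) :
      (qMatrix μpr (A 1) (N 1) K).PosDef :=
    qMatrix_posDef μpr (hmeas 0) hmom hENpos hK
  have hpsd : ∀ t, (Kseq μpr A N t).PosSemidef := by
    intro t
    induction t with
    | zero => exact PosSemidef.zero
    | succ t ih =>
      rw [Kseq_succ]
      exact piMap_posSemidef (hq ih).posSemidef ((hq ih).submatrix Sum.inr_injective)
  refine fun t => ⟨hpsd t, ?_⟩
  induction t with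
  | zero => simpa [loewnerLE, Kseq] using hpsd 1
  | succ t ih =>
    rw [Kseq_succ, Kseq_succ μpr A N (t + 1)]
    exact piMap_mono (hq (hpsd t)).isHermitian ((hq (hpsd t)).submatrix Sum.inr_injective)
      (qMatrix_mono μpr (hmeas 0) hmom ih)

/-- The Riccati iteration is positive semidefinite and monotone increasing. -/
theorem Kseq_monotone
    {n m : ℕ} {Ω : Type*} [MeasurableSpace Ω]
    (μpr : Measure Ω) [IsProbabilityMeasure μpr]
    (A : ℕ → Ω → Matrix (Fin n) (Fin n ⊕ Fin m) ℝ)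
    (N : ℕ → Ω → Matrix (Fin n ⊕ Fin m) (Fin n ⊕ Fin m) ℝ)
    (hmeas : ∀ t : ℕ, Measurable fun ω => (A (t + 1) ω, N (t + 1) ω))
    (hindep : ProbabilityTheory.iIndepFun
      (fun (t : ℕ) (ω : Ω) => (A (t + 1) ω, N (t + 1) ω)) μpr)
    (hident : ∀ t : ℕ, ProbabilityTheory.IdentDistrib
      (fun ω => (A (t + 1) ω, N (t + 1) ω)) (fun ω => (A 1 ω, N 1 ω)) μpr μpr)
    (hNpsd : ∀ (t : ℕ) (ω : Ω), (N (t + 1) ω).PosSemidef)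
    (hmom : Integrable
      (fun ω => specNorm (N 1 ω) ^ 2 + specNorm ((A 1 ω)ᵀ * A 1 ω) ^ 2) μpr)
    (hENpos : (matExp μpr (N 1)).PosDef)
    : ∀ t : ℕ, (Kseq μpr A N t).PosSemidef ∧
      loewnerLE (Kseq μpr A N t) (Kseq μpr A N (t + 1)) :=
  Kseq_monotone_general μpr A N hmeas hmom hENpos

end
end

section
/- Suppose a positive semidefinite n×n matrix K satisfies the algebraic Riccati equation K = π(E[N₁ + A₁ᵀ K A₁]). Set Q* = E[N₁ + A₁ᵀ K A₁] and Γ = Γ(Q*). Then for every x ∈ ℝⁿ, the linear feedback control u_t = Γ x_t (where x_0 = x and x_{t+1} = A_{t+1}[x_t; Γ x_t]) is an admissible control satisfying E[J(x, u)] ≤ xᵀ K x. In particular V(x) ≤ xᵀ K x for all x, so the LQ problem is well-posed. -/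
open MeasureTheory Matrix Filter ProbabilityTheory
open scoped ENNReal NNReal

noncomputable section

/-- Closed-loop state under the constant linear feedback `u_t = G x_t`. -/
def fbState {n m : ℕ} {Ω : Type*} (A : ℕ → Ω → Matrix (Fin n) (Fin n ⊕ Fin m) ℝ)
    (G : Matrix (Fin m) (Fin n) ℝ) (x : Fin n → ℝ) : ℕ → Ω → Fin n → ℝ
  | 0 => fun _ => x
  | t + 1 => fun ω =>
      A (t + 1) ω *ᵥ Sum.elim (fbState A G x t ω) (G *ᵥ fbState A G x t ω)

/-!
Let `Q = E[N₁ + A₁ᵀ K A₁]` and `Γ = Γ(Q)`. Since `E[N₁] ≻ 0` and `A₁ᵀ K A₁ ⪰ 0`,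
`vᵀ Q v > 0` for `v ≠ 0`, so `Q_uu` is invertible, and eliminating the `u`-block gives
`[v; Γv]ᵀ Q [v; Γv] = vᵀ π(Q) v = vᵀ K v` by the Riccati equation.

Along the closed loop, `z_t = [x_t; Γ x_t]` is `𝓕_t`-measurable and hence independent of
`(A_{t+1}, N_{t+1})`; this also keeps the second moments of the state finite. Splitting
`z_tᵀ (N_{t+1} + A_{t+1}ᵀ K A_{t+1}) z_t` into the stage cost plus `x_{t+1}ᵀ K x_{t+1}` and
taking expectations, independence replaces the middle matrix by `Q`, so
`E[c_t] + E[x_{t+1}ᵀ K x_{t+1}] = E[x_tᵀ K x_t]`. Telescoping with `K ⪰ 0` bounds every partial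
sum of expected stage costs by `xᵀ K x`.
-/

lemma abs_apply_le_specNorm_s10 {ι κ : Type*} [Fintype ι] [Fintype κ] [DecidableEq κ]
    (M : Matrix ι κ ℝ) (i : ι) (j : κ) : |M i j| ≤ specNorm M := by
  open scoped Matrix.Norms.L2Operator in
  have h := M.l2_opNorm_mulVec (EuclideanSpace.single j 1)
  rw [PiLp.norm_single, norm_one, mul_one] at h
  calc |M i j| = ‖(EuclideanSpace.equiv ι ℝ).symm (M *ᵥ EuclideanSpace.single j 1) i‖ := by
        simp [mulVec_single]
    _ ≤ ‖(EuclideanSpace.equiv ι ℝ).symm (M *ᵥ EuclideanSpace.single j 1)‖ :=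
        PiLp.norm_apply_le _ i
    _ ≤ specNorm M := h

lemma sq_apply_le_specNorm_transpose_mul_self {ι κ : Type*} [Fintype ι] [Fintype κ]
    [DecidableEq κ] (M : Matrix ι κ ℝ) (i : ι) (j : κ) : M i j ^ 2 ≤ specNorm (Mᵀ * M) := by
  open scoped Matrix.Norms.L2Operator in
  have hnorm : specNorm (Mᵀ * M) = specNorm M ^ 2 := by
    rw [sq, ← conjTranspose_eq_transpose_of_trivial]
    exact M.l2_opNorm_conjTranspose_mul_self
  rw [hnorm, ← sq_abs]
  exact pow_le_pow_left₀ (abs_nonneg _) (abs_apply_le_specNorm_s10 M i j) 2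

lemma dotProduct_mulVec_eq_sum {ι : Type*} [Fintype ι] (M : Matrix ι ι ℝ) (v w : ι → ℝ) :
    v ⬝ᵥ (M *ᵥ w) = ∑ p : ι × ι, v p.1 * w p.2 * M p.1 p.2 := by
  simp only [dotProduct, mulVec, Finset.mul_sum, Fintype.sum_prod_type]
  exact Finset.sum_congr rfl fun k _ => Finset.sum_congr rfl fun l _ => by ring

lemma transpose_mul_mul_apply {ι κ : Type*} [Fintype κ] (B : Matrix κ ι ℝ) (K : Matrix κ κ ℝ)
    (k l : ι) : (Bᵀ * K * B) k l = ∑ p : κ × κ, B p.1 k * B p.2 l * K p.1 p.2 := by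
  simp only [mul_apply, transpose_apply, Finset.sum_mul, Fintype.sum_prod_type]
  rw [Finset.sum_comm]
  exact Finset.sum_congr rfl fun k _ => Finset.sum_congr rfl fun l _ => by ring

lemma dotProduct_transpose_mul_mul_mulVec {ι κ : Type*} [Fintype ι] [Fintype κ]
    (B : Matrix κ ι ℝ) (K : Matrix κ κ ℝ) (v : ι → ℝ) :
    v ⬝ᵥ ((Bᵀ * K * B) *ᵥ v) = (B *ᵥ v) ⬝ᵥ (K *ᵥ (B *ᵥ v)) := by
  rw [Matrix.mul_assoc, ← mulVec_mulVec, dotProduct_mulVec, vecMul_transpose, ← mulVec_mulVec]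

section Blocks

variable {ι κ : Type*} [Fintype ι] [Fintype κ]

lemma sumElim_dotProduct_mulVec_sumElim_s10 (Q : Matrix (ι ⊕ κ) (ι ⊕ κ) ℝ) (v : ι → ℝ)
    (w : κ → ℝ) :
    Sum.elim v w ⬝ᵥ (Q *ᵥ Sum.elim v w) =
      v ⬝ᵥ (Q.toBlocks₁₁ *ᵥ v) + v ⬝ᵥ (Q.toBlocks₁₂ *ᵥ w)
        + (w ⬝ᵥ (Q.toBlocks₂₁ *ᵥ v) + w ⬝ᵥ (Q.toBlocks₂₂ *ᵥ w)) := by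
  conv_lhs => rw [← fromBlocks_toBlocks Q, fromBlocks_mulVec, sumElim_dotProduct_sumElim]
  simp only [dotProduct_add, Sum.elim_comp_inl, Sum.elim_comp_inr]

lemma isUnit_det_toBlocks₂₂_of_pos [DecidableEq κ] {Q : Matrix (ι ⊕ κ) (ι ⊕ κ) ℝ}
    (hQ : ∀ v ≠ 0, 0 < v ⬝ᵥ (Q *ᵥ v)) : IsUnit Q.toBlocks₂₂.det := by
  refine isUnit_iff_ne_zero.mpr fun hdet => ?_
  obtain ⟨w, hw, hQw⟩ := exists_mulVec_eq_zero_iff.mpr hdet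
  have hpos := hQ (Sum.elim 0 w) fun h => hw (funext fun j => congrFun h (Sum.inr j))
  simp [sumElim_dotProduct_mulVec_sumElim_s10, hQw] at hpos

end Blocks

lemma sumElim_gammaMap_dotProduct_mulVec {n m : ℕ}
    {Q : Matrix (Fin n ⊕ Fin m) (Fin n ⊕ Fin m) ℝ} (hQ : IsUnit Q.toBlocks₂₂.det)
    (v : Fin n → ℝ) :
    Sum.elim v (gammaMap Q *ᵥ v) ⬝ᵥ (Q *ᵥ Sum.elim v (gammaMap Q *ᵥ v)) =
      v ⬝ᵥ (piMap Q *ᵥ v) := by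
  have hΓ : Q.toBlocks₂₂ *ᵥ (gammaMap Q *ᵥ v) = -(Q.toBlocks₂₁ *ᵥ v) := by
    rw [gammaMap, mulVec_mulVec, Matrix.mul_neg, ← Matrix.mul_assoc, mul_nonsing_inv _ hQ,
      Matrix.one_mul, neg_mulVec]
  rw [sumElim_dotProduct_mulVec_sumElim_s10, hΓ, piMap, gammaMap, sub_mulVec, dotProduct_sub,
    mulVec_mulVec, Matrix.mul_neg, neg_mulVec, dotProduct_neg, dotProduct_neg, Matrix.mul_assoc]
  ring

def stackGain {n m : ℕ} (G : Matrix (Fin m) (Fin n) ℝ) : Matrix (Fin n ⊕ Fin m) (Fin n) ℝ :=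
  fromRows 1 G

lemma stackGain_mulVec {n m : ℕ} (G : Matrix (Fin m) (Fin n) ℝ) (v : Fin n → ℝ) :
    stackGain G *ᵥ v = Sum.elim v (G *ᵥ v) := by
  rw [stackGain, fromRows_mulVec, one_mulVec]

section Measurability

variable {ι κ : Type*}

lemma measurable_matrix_apply (i : ι) (j : κ) : Measurable fun M : Matrix ι κ ℝ => M i j := by
  fun_prop

lemma measurable_mulVec [Fintype κ] : Measurable fun p : Matrix ι κ ℝ × (κ → ℝ) => p.1 *ᵥ p.2 :=
  measurable_pi_lambda _ fun i => by
    simp only [mulVec, dotProduct]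
    exact Finset.measurable_sum _ fun j _ =>
      ((measurable_matrix_apply i j).comp measurable_fst).mul
        ((measurable_pi_apply j).comp measurable_snd)

lemma measurable_const_mulVec [Fintype κ] (B : Matrix ι κ ℝ) :
    Measurable fun v : κ → ℝ => B *ᵥ v :=
  measurable_mulVec.comp (measurable_const.prodMk measurable_id)

lemma measurable_add_transpose_mul_mul [Fintype κ] (K : Matrix κ κ ℝ) :
    Measurable fun p : Matrix κ ι ℝ × Matrix ι ι ℝ => p.2 + p.1ᵀ * K * p.1 :=
  measurable_pi_lambda _ fun k => measurable_pi_lambda _ fun l => by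
    show Measurable fun p : Matrix κ ι ℝ × Matrix ι ι ℝ => (p.2 + p.1ᵀ * K * p.1) k l
    simp only [Matrix.add_apply, transpose_mul_mul_apply]
    refine ((measurable_matrix_apply k l).comp measurable_snd).add
      (Finset.measurable_sum _ fun p _ => ?_)
    exact (((measurable_matrix_apply p.1 k).comp measurable_fst).mul
      ((measurable_matrix_apply p.2 l).comp measurable_fst)).mul_const _

end Measurability

section Moments

variable {Ω : Type*} [MeasurableSpace Ω] {μ : Measure Ω} {ι κ : Type*}

lemma ProbabilityTheory.IndepFun.memLp_two_mul {f g : Ω → ℝ} (hfg : IndepFun f g μ)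
    (hf : MemLp f 2 μ) (hg : MemLp g 2 μ) : MemLp (f * g) 2 μ := by
  refine (memLp_two_iff_integrable_sq (hf.1.mul hg.1)).mpr ?_
  have hsq : IndepFun (fun ω => f ω ^ 2) (fun ω => g ω ^ 2) μ :=
    hfg.comp (measurable_id.pow_const 2) (measurable_id.pow_const 2)
  exact (hsq.integrable_mul hf.integrable_sq hg.integrable_sq).congr
    (.of_forall fun ω => (mul_pow (f ω) (g ω) 2).symm)

lemma ProbabilityTheory.IndepFun.mul_apply_matrix_apply {X : Ω → ι → ℝ}
    {M : Ω → Matrix ι ι ℝ} (hXM : IndepFun X M μ) (p : ι × ι) :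
    IndepFun (fun ω => X ω p.1 * X ω p.2) (fun ω => M ω p.1 p.2) μ :=
  hXM.comp (φ := fun v : ι → ℝ => v p.1 * v p.2) (by fun_prop) (measurable_matrix_apply p.1 p.2)

lemma memLp_mulVec_const [Fintype ι] (B : Matrix κ ι ℝ) {X : Ω → ι → ℝ}
    (hX : ∀ i, MemLp (fun ω => X ω i) 2 μ) (k : κ) : MemLp (fun ω => (B *ᵥ X ω) k) 2 μ := by
  simp only [mulVec, dotProduct]
  exact memLp_finsetSum _ fun i _ => (hX i).const_mul (B k i)

lemma memLp_mulVec_of_indepFun [Fintype ι] {B : Ω → Matrix κ ι ℝ} {X : Ω → ι → ℝ}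
    (hBX : IndepFun B X μ) (hB : ∀ k i, MemLp (fun ω => B ω k i) 2 μ)
    (hX : ∀ i, MemLp (fun ω => X ω i) 2 μ) (k : κ) :
    MemLp (fun ω => (B ω *ᵥ X ω) k) 2 μ := by
  simp only [mulVec, dotProduct]
  exact memLp_finsetSum _ fun i _ =>
    (hBX.comp (measurable_matrix_apply k i) (measurable_pi_apply i)).memLp_two_mul (hB k i) (hX i)

lemma integrable_transpose_mul_mul_apply [Fintype κ] (K : Matrix κ κ ℝ) {B : Ω → Matrix κ ι ℝ}
    (hB : ∀ i k, MemLp (fun ω => B ω i k) 2 μ) (k l : ι) :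
    Integrable (fun ω => ((B ω)ᵀ * K * B ω) k l) μ := by
  simp only [transpose_mul_mul_apply]
  exact integrable_finsetSum _ fun p _ => ((hB p.1 k).integrable_mul (hB p.2 l)).mul_const _

lemma integrable_dotProduct_mulVec_const [Fintype ι] (M : Matrix ι ι ℝ) {X : Ω → ι → ℝ}
    (hX : ∀ i, MemLp (fun ω => X ω i) 2 μ) : Integrable (fun ω => X ω ⬝ᵥ (M *ᵥ X ω)) μ := by
  simp only [dotProduct_mulVec_eq_sum]
  exact integrable_finsetSum _ fun p _ => ((hX p.1).integrable_mul (hX p.2)).mul_const _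

lemma integrable_dotProduct_mulVec_of_indepFun [Fintype ι] {X : Ω → ι → ℝ}
    {M : Ω → Matrix ι ι ℝ} (hXM : IndepFun X M μ) (hX : ∀ i, MemLp (fun ω => X ω i) 2 μ)
    (hM : ∀ i j, Integrable (fun ω => M ω i j) μ) :
    Integrable (fun ω => X ω ⬝ᵥ (M ω *ᵥ X ω)) μ := by
  simp only [dotProduct_mulVec_eq_sum]
  exact integrable_finsetSum _ fun p _ => (hXM.mul_apply_matrix_apply p).integrable_mul
    ((hX p.1).integrable_mul (hX p.2)) (hM p.1 p.2)

lemma integral_dotProduct_mulVec_of_indepFun [Fintype ι] {X : Ω → ι → ℝ}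
    {M : Ω → Matrix ι ι ℝ} (hXM : IndepFun X M μ) (hX : ∀ i, MemLp (fun ω => X ω i) 2 μ)
    (hM : ∀ i j, Integrable (fun ω => M ω i j) μ) :
    ∫ ω, X ω ⬝ᵥ (M ω *ᵥ X ω) ∂μ = ∫ ω, X ω ⬝ᵥ (matExp μ M *ᵥ X ω) ∂μ := by
  have hXX : ∀ p : ι × ι, Integrable (fun ω => X ω p.1 * X ω p.2) μ :=
    fun p => (hX p.1).integrable_mul (hX p.2)
  simp only [dotProduct_mulVec_eq_sum]
  rw [integral_finsetSum _ fun p _ => (hXX p).mul_const _, integral_finsetSum]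
  · refine Finset.sum_congr rfl fun p _ => ?_
    rw [(hXM.mul_apply_matrix_apply p).integral_fun_mul_eq_mul_integral (hXX p).1
      (hM p.1 p.2).1, integral_mul_const]
    rfl
  · exact fun p _ => (hXM.mul_apply_matrix_apply p).integrable_mul (hXX p) (hM p.1 p.2)

lemma dotProduct_matExp_mulVec [Fintype ι] {M : Ω → Matrix ι ι ℝ}
    (hM : ∀ i j, Integrable (fun ω => M ω i j) μ) (v w : ι → ℝ) :
    v ⬝ᵥ (matExp μ M *ᵥ w) = ∫ ω, v ⬝ᵥ (M ω *ᵥ w) ∂μ := by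
  simp only [dotProduct_mulVec_eq_sum]
  rw [integral_finsetSum _ fun p _ => (hM p.1 p.2).const_mul _]
  simp only [integral_const_mul, matExp, of_apply]

lemma dotProduct_matExp_add_mulVec_pos [Fintype ι] {M P : Ω → Matrix ι ι ℝ}
    (hM : ∀ i j, Integrable (fun ω => M ω i j) μ) (hP : ∀ i j, Integrable (fun ω => P ω i j) μ)
    (hMpos : (matExp μ M).PosDef) (hPpsd : ∀ ω, (P ω).PosSemidef) {v : ι → ℝ} (hv : v ≠ 0) :
    0 < v ⬝ᵥ (matExp μ (fun ω => M ω + P ω) *ᵥ v) := by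
  have hadd : matExp μ (fun ω => M ω + P ω) = matExp μ M + matExp μ P := by
    ext i j
    exact integral_add (hM i j) (hP i j)
  have hPnonneg : 0 ≤ v ⬝ᵥ (matExp μ P *ᵥ v) := by
    rw [dotProduct_matExp_mulVec hP]
    exact integral_nonneg fun ω => by simpa using (hPpsd ω).dotProduct_mulVec_nonneg v
  rw [hadd, add_mulVec, dotProduct_add]
  exact add_pos_of_pos_of_nonneg (by simpa using hMpos.dotProduct_mulVec_pos hv) hPnonneg

lemma matExp_comp_eq_of_identDistrib {β : Type*} [MeasurableSpace β] {f g : Ω → β}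
    (hfg : IdentDistrib f g μ μ) {φ : β → Matrix ι κ ℝ} (hφ : Measurable φ) :
    matExp μ (fun ω => φ (f ω)) = matExp μ (fun ω => φ (g ω)) := by
  ext i j
  exact (hfg.comp ((measurable_matrix_apply i j).comp hφ)).integral_eq

end Moments

lemma sum_range_le_of_add_le {c q : ℕ → ℝ} (hq : ∀ t, 0 ≤ q t)
    (hcq : ∀ t, c t + q (t + 1) ≤ q t) (T : ℕ) : ∑ t ∈ Finset.range T, c t ≤ q 0 := by
  suffices h : ∀ T, ∑ t ∈ Finset.range T, c t + q T ≤ q 0 from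
    (le_add_of_nonneg_right (hq T)).trans (h T)
  intro T
  induction T with
  | zero => simp
  | succ T ih => rw [Finset.sum_range_succ]; linarith [hcq T]

lemma lintegral_tsum_ofReal_le {Ω : Type*} [MeasurableSpace Ω] {μ : Measure Ω}
    {f : ℕ → Ω → ℝ} (hf : ∀ t, Integrable (f t) μ) (hf0 : ∀ t, 0 ≤ᵐ[μ] f t) {C : ℝ}
    (hC : ∀ T, ∑ t ∈ Finset.range T, ∫ ω, f t ω ∂μ ≤ C) :
    ∫⁻ ω, ∑' t, ENNReal.ofReal (f t ω) ∂μ ≤ ENNReal.ofReal C := by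
  rw [lintegral_tsum fun t => (hf t).1.aemeasurable.ennreal_ofReal]
  refine ENNReal.tsum_le_of_sum_range_le fun T => ?_
  simp only [← ofReal_integral_eq_lintegral_ofReal (hf _) (hf0 _)]
  rw [← ENNReal.ofReal_sum_of_nonneg fun t _ => integral_nonneg_of_ae (hf0 t)]
  exact ENNReal.ofReal_le_ofReal (hC T)

section ClosedLoop

variable {n m : ℕ} {Ω : Type*}
  (A : ℕ → Ω → Matrix (Fin n) (Fin n ⊕ Fin m) ℝ)
  (N : ℕ → Ω → Matrix (Fin n ⊕ Fin m) (Fin n ⊕ Fin m) ℝ)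

lemma lqFiltration_mono : Monotone (lqFiltration A N) := fun _ _ hst =>
  biSup_mono fun _ hs =>
    Finset.mem_Icc.mpr ⟨(Finset.mem_Icc.mp hs).1, (Finset.mem_Icc.mp hs).2.trans hst⟩

lemma measurable_sample_lqFiltration (t : ℕ) :
    Measurable[lqFiltration A N (t + 1)] fun ω => (A (t + 1) ω, N (t + 1) ω) :=
  Measurable.of_comap_le <|
    le_biSup (fun s => MeasurableSpace.comap (fun ω => (A s ω, N s ω)) inferInstance)
      (Finset.mem_Icc.mpr ⟨Nat.le_add_left 1 t, le_rfl⟩)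

lemma lqFiltration_le_iSup_sample (t : ℕ) :
    lqFiltration A N t ≤
      ⨆ s ∈ Set.Iio t,
        MeasurableSpace.comap (fun ω => (A (s + 1) ω, N (s + 1) ω)) inferInstance := by
  refine iSup₂_le fun s hs => ?_
  obtain ⟨hs1, hst⟩ := Finset.mem_Icc.mp hs
  obtain ⟨r, rfl⟩ := Nat.exists_eq_add_of_le' hs1
  exact le_iSup₂_of_le (f := fun s (_ : s ∈ Set.Iio t) =>
    MeasurableSpace.comap (fun ω => (A (s + 1) ω, N (s + 1) ω)) inferInstance) r hst le_rfl

variable (G : Matrix (Fin m) (Fin n) ℝ) (x : Fin n → ℝ)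

lemma fbState_succ (t : ℕ) (ω : Ω) :
    fbState A G x (t + 1) ω = A (t + 1) ω *ᵥ (stackGain G *ᵥ fbState A G x t ω) := by
  rw [stackGain_mulVec]
  rfl

lemma fbState_adapted (t : ℕ) : Measurable[lqFiltration A N t] (fbState A G x t) := by
  induction t with
  | zero => exact measurable_const
  | succ t ih =>
    have hZ := ih.mono (lqFiltration_mono A N t.le_succ) le_rfl
    simp only [funext (fbState_succ A G x t)]
    exact measurable_mulVec.comp
      ((measurable_fst.comp (measurable_sample_lqFiltration A N t)).prodMk
        ((measurable_const_mulVec _).comp hZ))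

lemma admissible_feedback : Admissible (lqFiltration A N) fun t ω => G *ᵥ fbState A G x t ω :=
  fun t => (measurable_const_mulVec G).comp (fbState_adapted A N G x t)

lemma statePath_feedback :
    statePath A x (fun t ω => G *ᵥ fbState A G x t ω) = fbState A G x := by
  funext t
  induction t with
  | zero => rfl
  | succ t ih => funext ω; simp only [statePath, ih]; rfl

lemma stageCost_feedback (t : ℕ) (ω : Ω) :
    stageCost A N x (fun t ω => G *ᵥ fbState A G x t ω) t ω =
      (stackGain G *ᵥ fbState A G x t ω) ⬝ᵥ
        (N (t + 1) ω *ᵥ (stackGain G *ᵥ fbState A G x t ω)) := by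
  rw [stageCost, statePath_feedback, stackGain_mulVec]

end ClosedLoop

section ClosedLoopCost

variable {n m : ℕ} {Ω : Type*} [MeasurableSpace Ω] {μ : Measure Ω}
  {A : ℕ → Ω → Matrix (Fin n) (Fin n ⊕ Fin m) ℝ}
  {N : ℕ → Ω → Matrix (Fin n ⊕ Fin m) (Fin n ⊕ Fin m) ℝ}

lemma indepFun_sample_of_measurable_lqFiltration
    (hmeas : ∀ t : ℕ, Measurable fun ω => (A (t + 1) ω, N (t + 1) ω))
    (hindep : iIndepFun (fun (t : ℕ) (ω : Ω) => (A (t + 1) ω, N (t + 1) ω)) μ)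
    {β : Type*} [MeasurableSpace β] {X : Ω → β} {t : ℕ}
    (hX : Measurable[lqFiltration A N t] X) :
    IndepFun X (fun ω => (A (t + 1) ω, N (t + 1) ω)) μ := by
  have hpast := indep_iSup_of_disjoint (fun s => (hmeas s).comap_le) hindep.iIndep
    (S := Set.Iio t) (T := {t}) (by simp)
  rw [iSup_singleton] at hpast
  exact (IndepFun_iff_Indep _ _ _).mpr <|
    indep_of_indep_of_le_left hpast (hX.comap_le.trans (lqFiltration_le_iSup_sample A N t))

variable (G : Matrix (Fin m) (Fin n) ℝ) (x : Fin n → ℝ)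

lemma indepFun_stackGain_fbState_sample
    (hmeas : ∀ t : ℕ, Measurable fun ω => (A (t + 1) ω, N (t + 1) ω))
    (hindep : iIndepFun (fun (t : ℕ) (ω : Ω) => (A (t + 1) ω, N (t + 1) ω)) μ) (t : ℕ) :
    IndepFun (fun ω => stackGain G *ᵥ fbState A G x t ω)
      (fun ω => (A (t + 1) ω, N (t + 1) ω)) μ :=
  indepFun_sample_of_measurable_lqFiltration hmeas hindep
    ((measurable_const_mulVec _).comp (fbState_adapted A N G x t))

lemma memLp_fbState [IsFiniteMeasure μ]
    (hmeas : ∀ t : ℕ, Measurable fun ω => (A (t + 1) ω, N (t + 1) ω))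
    (hindep : iIndepFun (fun (t : ℕ) (ω : Ω) => (A (t + 1) ω, N (t + 1) ω)) μ)
    (hA : ∀ t i j, MemLp (fun ω => A (t + 1) ω i j) 2 μ) (t : ℕ) (i : Fin n) :
    MemLp (fun ω => fbState A G x t ω i) 2 μ := by
  induction t generalizing i with
  | zero => exact memLp_const (x i)
  | succ t ih =>
    simp only [fbState_succ]
    exact memLp_mulVec_of_indepFun
      ((indepFun_stackGain_fbState_sample G x hmeas hindep t).symm.comp measurable_fst
        measurable_id)
      (hA t) (memLp_mulVec_const _ ih) i

lemma integrable_stageCost_feedback [IsFiniteMeasure μ]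
    (hmeas : ∀ t : ℕ, Measurable fun ω => (A (t + 1) ω, N (t + 1) ω))
    (hindep : iIndepFun (fun (t : ℕ) (ω : Ω) => (A (t + 1) ω, N (t + 1) ω)) μ)
    (hA : ∀ t i j, MemLp (fun ω => A (t + 1) ω i j) 2 μ)
    (hN : ∀ t i j, Integrable (fun ω => N (t + 1) ω i j) μ) (t : ℕ) :
    Integrable (stageCost A N x (fun t ω => G *ᵥ fbState A G x t ω) t) μ := by
  simp only [funext (stageCost_feedback A N G x t)]
  exact integrable_dotProduct_mulVec_of_indepFun
    ((indepFun_stackGain_fbState_sample G x hmeas hindep t).comp measurable_id measurable_snd)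
    (memLp_mulVec_const _ (memLp_fbState G x hmeas hindep hA t)) (hN t)

lemma integral_stageCost_feedback_add_le [IsFiniteMeasure μ]
    (hmeas : ∀ t : ℕ, Measurable fun ω => (A (t + 1) ω, N (t + 1) ω))
    (hindep : iIndepFun (fun (t : ℕ) (ω : Ω) => (A (t + 1) ω, N (t + 1) ω)) μ)
    (hA : ∀ t i j, MemLp (fun ω => A (t + 1) ω i j) 2 μ)
    (hN : ∀ t i j, Integrable (fun ω => N (t + 1) ω i j) μ) {K : Matrix (Fin n) (Fin n) ℝ}
    (t : ℕ) (hLyap : ∀ v, (stackGain G *ᵥ v) ⬝ᵥ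
      (matExp μ (fun ω => N (t + 1) ω + (A (t + 1) ω)ᵀ * K * A (t + 1) ω) *ᵥ
        (stackGain G *ᵥ v)) ≤ v ⬝ᵥ (K *ᵥ v)) :
    ∫ ω, stageCost A N x (fun t ω => G *ᵥ fbState A G x t ω) t ω ∂μ
        + ∫ ω, fbState A G x (t + 1) ω ⬝ᵥ (K *ᵥ fbState A G x (t + 1) ω) ∂μ
      ≤ ∫ ω, fbState A G x t ω ⬝ᵥ (K *ᵥ fbState A G x t ω) ∂μ := by
  set z := fun ω => stackGain G *ᵥ fbState A G x t ω
  set M := fun ω => N (t + 1) ω + (A (t + 1) ω)ᵀ * K * A (t + 1) ω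
  have hz : ∀ i, MemLp (fun ω => z ω i) 2 μ :=
    memLp_mulVec_const _ (memLp_fbState G x hmeas hindep hA t)
  have hsplit : ∀ ω, z ω ⬝ᵥ (M ω *ᵥ z ω) =
      stageCost A N x (fun t ω => G *ᵥ fbState A G x t ω) t ω
        + fbState A G x (t + 1) ω ⬝ᵥ (K *ᵥ fbState A G x (t + 1) ω) := fun ω => by
    rw [stageCost_feedback, fbState_succ, add_mulVec, dotProduct_add,
      dotProduct_transpose_mul_mul_mulVec]
  calc _ = ∫ ω, z ω ⬝ᵥ (M ω *ᵥ z ω) ∂μ := by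
        rw [← integral_add (integrable_stageCost_feedback G x hmeas hindep hA hN t)
          (integrable_dotProduct_mulVec_const K (memLp_fbState G x hmeas hindep hA (t + 1)))]
        simp only [hsplit]
    _ = ∫ ω, z ω ⬝ᵥ (matExp μ M *ᵥ z ω) ∂μ :=
        integral_dotProduct_mulVec_of_indepFun
          ((indepFun_stackGain_fbState_sample G x hmeas hindep t).comp measurable_id
            (measurable_add_transpose_mul_mul K)) hz
          fun k l => (hN t k l).add (integrable_transpose_mul_mul_apply K (hA t) k l)
    _ ≤ _ := integral_mono (integrable_dotProduct_mulVec_const _ hz)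
        (integrable_dotProduct_mulVec_const K (memLp_fbState G x hmeas hindep hA t))
        fun ω => hLyap _

lemma lintegral_costJ_feedback_le [IsProbabilityMeasure μ]
    (hmeas : ∀ t : ℕ, Measurable fun ω => (A (t + 1) ω, N (t + 1) ω))
    (hindep : iIndepFun (fun (t : ℕ) (ω : Ω) => (A (t + 1) ω, N (t + 1) ω)) μ)
    (hA : ∀ t i j, MemLp (fun ω => A (t + 1) ω i j) 2 μ)
    (hN : ∀ t i j, Integrable (fun ω => N (t + 1) ω i j) μ)
    (hNpsd : ∀ t ω, (N (t + 1) ω).PosSemidef) {K : Matrix (Fin n) (Fin n) ℝ}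
    (hK : K.PosSemidef) (hLyap : ∀ t v, (stackGain G *ᵥ v) ⬝ᵥ
      (matExp μ (fun ω => N (t + 1) ω + (A (t + 1) ω)ᵀ * K * A (t + 1) ω) *ᵥ
        (stackGain G *ᵥ v)) ≤ v ⬝ᵥ (K *ᵥ v)) :
    ∫⁻ ω, costJ A N x (fun t ω => G *ᵥ fbState A G x t ω) ω ∂μ ≤
      ENNReal.ofReal (x ⬝ᵥ (K *ᵥ x)) := by
  have hcost0 : ∀ t, 0 ≤ᵐ[μ] stageCost A N x (fun t ω => G *ᵥ fbState A G x t ω) t :=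
    fun t => .of_forall fun ω => by
      simpa [stageCost_feedback] using
        (hNpsd t ω).dotProduct_mulVec_nonneg (stackGain G *ᵥ fbState A G x t ω)
  have hq0 : ∫ ω, fbState A G x 0 ω ⬝ᵥ (K *ᵥ fbState A G x 0 ω) ∂μ = x ⬝ᵥ (K *ᵥ x) := by
    simp [fbState]
  refine lintegral_tsum_ofReal_le (integrable_stageCost_feedback G x hmeas hindep hA hN)
    hcost0 fun T => ?_
  rw [← hq0]
  exact sum_range_le_of_add_le
    (fun t => integral_nonneg fun ω => by
      simpa using hK.dotProduct_mulVec_nonneg (fbState A G x t ω))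
    (fun t => integral_stageCost_feedback_add_le G x hmeas hindep hA hN t (hLyap t)) T

end ClosedLoopCost

section IID

variable {n m : ℕ} {Ω : Type*} [MeasurableSpace Ω] {μ : Measure Ω} [IsFiniteMeasure μ]
  {A : ℕ → Ω → Matrix (Fin n) (Fin n ⊕ Fin m) ℝ}
  {N : ℕ → Ω → Matrix (Fin n ⊕ Fin m) (Fin n ⊕ Fin m) ℝ}

lemma integrable_N_apply (hmeas : ∀ t : ℕ, Measurable fun ω => (A (t + 1) ω, N (t + 1) ω))
    (hident : ∀ t : ℕ, IdentDistrib
      (fun ω => (A (t + 1) ω, N (t + 1) ω)) (fun ω => (A 1 ω, N 1 ω)) μ μ)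
    (hmom : Integrable
      (fun ω => specNorm (N 1 ω) ^ 2 + specNorm ((A 1 ω)ᵀ * A 1 ω) ^ 2) μ)
    (t : ℕ) (i j : Fin n ⊕ Fin m) : Integrable (fun ω => N (t + 1) ω i j) μ := by
  have hφ : Measurable fun p : Matrix (Fin n) (Fin n ⊕ Fin m) ℝ ×
      Matrix (Fin n ⊕ Fin m) (Fin n ⊕ Fin m) ℝ => p.2 i j :=
    (measurable_matrix_apply i j).comp measurable_snd
  refine ((hident t).comp hφ).integrable_iff.mpr <| ((integrable_const 1).add hmom).mono'
    (hφ.comp (hmeas 0)).aestronglyMeasurable (.of_forall fun ω => ?_)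
  have h := abs_apply_le_specNorm_s10 (N 1 ω) i j
  simp only [Function.comp_apply, Real.norm_eq_abs, Pi.add_apply]
  nlinarith [sq_nonneg (specNorm (N 1 ω) - 1 / 2), sq_nonneg (specNorm ((A 1 ω)ᵀ * A 1 ω))]

lemma memLp_A_apply (hmeas : ∀ t : ℕ, Measurable fun ω => (A (t + 1) ω, N (t + 1) ω))
    (hident : ∀ t : ℕ, IdentDistrib
      (fun ω => (A (t + 1) ω, N (t + 1) ω)) (fun ω => (A 1 ω, N 1 ω)) μ μ)
    (hmom : Integrable
      (fun ω => specNorm (N 1 ω) ^ 2 + specNorm ((A 1 ω)ᵀ * A 1 ω) ^ 2) μ)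
    (t : ℕ) (i : Fin n) (j : Fin n ⊕ Fin m) : MemLp (fun ω => A (t + 1) ω i j) 2 μ := by
  have hφ : Measurable fun p : Matrix (Fin n) (Fin n ⊕ Fin m) ℝ ×
      Matrix (Fin n ⊕ Fin m) (Fin n ⊕ Fin m) ℝ => p.1 i j :=
    (measurable_matrix_apply i j).comp measurable_fst
  refine ((hident t).comp hφ).memLp_iff.mpr <|
    (memLp_two_iff_integrable_sq (hφ.comp (hmeas 0)).aestronglyMeasurable).mpr <|
      ((integrable_const 1).add hmom).mono' ((hφ.comp (hmeas 0)).pow_const 2).aestronglyMeasurable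
        (.of_forall fun ω => ?_)
  have h := sq_apply_le_specNorm_transpose_mul_self (A 1 ω) i j
  simp only [Function.comp_apply, Real.norm_eq_abs, Pi.add_apply, abs_pow, sq_abs]
  nlinarith [sq_nonneg (specNorm ((A 1 ω)ᵀ * A 1 ω) - 1 / 2), sq_nonneg (specNorm (N 1 ω))]

end IID

/-- If `K ⪰ 0` solves the ARE, then the linear feedback `u_t = Γ(Q*) x_t` is an
admissible control with expected cost at most `xᵀ K x`; in particular
`V(x) ≤ xᵀ K x` for all `x`, so the LQ problem is well-posed. -/
theorem feedback_control_of_ARE_solution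
    {n m : ℕ} {Ω : Type*} [MeasurableSpace Ω]
    (μpr : Measure Ω) [IsProbabilityMeasure μpr]
    (A : ℕ → Ω → Matrix (Fin n) (Fin n ⊕ Fin m) ℝ)
    (N : ℕ → Ω → Matrix (Fin n ⊕ Fin m) (Fin n ⊕ Fin m) ℝ)
    (hmeas : ∀ t : ℕ, Measurable fun ω => (A (t + 1) ω, N (t + 1) ω))
    (hindep : ProbabilityTheory.iIndepFun
      (fun (t : ℕ) (ω : Ω) => (A (t + 1) ω, N (t + 1) ω)) μpr)
    (hident : ∀ t : ℕ, ProbabilityTheory.IdentDistrib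
      (fun ω => (A (t + 1) ω, N (t + 1) ω)) (fun ω => (A 1 ω, N 1 ω)) μpr μpr)
    (hNpsd : ∀ (t : ℕ) (ω : Ω), (N (t + 1) ω).PosSemidef)
    (hmom : Integrable
      (fun ω => specNorm (N 1 ω) ^ 2 + specNorm ((A 1 ω)ᵀ * A 1 ω) ^ 2) μpr)
    (hENpos : (matExp μpr (N 1)).PosDef)
    (K : Matrix (Fin n) (Fin n) ℝ) (hK : K.PosSemidef)
    (hsol : K = piMap (matExp μpr (fun ω => N 1 ω + (A 1 ω)ᵀ * K * A 1 ω))) :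
    ∀ x : Fin n → ℝ,
      (Admissible (lqFiltration A N)
        (fun t ω => gammaMap (matExp μpr (fun ω' => N 1 ω' + (A 1 ω')ᵀ * K * A 1 ω'))
          *ᵥ fbState A (gammaMap (matExp μpr (fun ω' => N 1 ω' + (A 1 ω')ᵀ * K * A 1 ω'))) x t ω)) ∧
      (∫⁻ ω, costJ A N x
          (fun t ω' => gammaMap (matExp μpr (fun ω'' => N 1 ω'' + (A 1 ω'')ᵀ * K * A 1 ω''))
            *ᵥ fbState A (gammaMap (matExp μpr (fun ω'' => N 1 ω'' + (A 1 ω'')ᵀ * K * A 1 ω''))) x t ω') ω ∂μpr)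
        ≤ ENNReal.ofReal (x ⬝ᵥ (K *ᵥ x)) ∧
      valueV μpr A N x ≤ ENNReal.ofReal (x ⬝ᵥ (K *ᵥ x)) ∧
      valueV μpr A N x < ⊤ := by
  intro x
  have hN := integrable_N_apply hmeas hident hmom
  have hA := memLp_A_apply hmeas hident hmom
  set Q := matExp μpr (fun ω => N 1 ω + (A 1 ω)ᵀ * K * A 1 ω)
  have hQ : IsUnit Q.toBlocks₂₂.det := isUnit_det_toBlocks₂₂_of_pos fun v hv =>
    dotProduct_matExp_add_mulVec_pos (hN 0) (integrable_transpose_mul_mul_apply K (hA 0)) hENpos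
      (fun ω => by simpa using hK.conjTranspose_mul_mul_same (A 1 ω)) hv
  have hLyap : ∀ t v, (stackGain (gammaMap Q) *ᵥ v) ⬝ᵥ
      (matExp μpr (fun ω => N (t + 1) ω + (A (t + 1) ω)ᵀ * K * A (t + 1) ω) *ᵥ
        (stackGain (gammaMap Q) *ᵥ v)) ≤ v ⬝ᵥ (K *ᵥ v) := fun t v => by
    rw [matExp_comp_eq_of_identDistrib (hident t) (measurable_add_transpose_mul_mul K),
      stackGain_mulVec, sumElim_gammaMap_dotProduct_mulVec hQ, ← hsol]
  have hadm := admissible_feedback A N (gammaMap Q) x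
  have hcost := lintegral_costJ_feedback_le (gammaMap Q) x hmeas hindep hA hN hNpsd hK hLyap
  have hV : valueV μpr A N x ≤ ENNReal.ofReal (x ⬝ᵥ (K *ᵥ x)) := (iInf₂_le _ hadm).trans hcost
  exact ⟨hadm, hcost, hV, hV.trans_lt ENNReal.ofReal_lt_top⟩

end
end
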